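/- arXiv:2506.03044 — 5 statements merged into one kernel-verified Lean document; each statement's English description precedes it below -/
import Mathlib

section
/- Let C ⊆ ℝ^p be a compact, α_C-strongly convex set and let F : ℝ^p → ℝ be convex, differentiable and τ_u-smooth, with 0 < r ≤ ‖∇F(x)‖₂ for all x ∈ C. Let x_* be a minimizer of F over C, let Δ ≥ 0, and set η = min{1, α_C r/(4τ_u)} and c = max{1/2, 1 − α_C r/(8τ_u)}. Suppose (x_t)_{t≥0} is a sequence with x₀ ∈ C such that for every t there exists v_t ∈ C with v_tᵀ∇F(x_t) ≤ min_{v∈C} vᵀ∇F(x_t) + Δ, and x_{t+1} = (1−η)x_t + η v_t. Then for every t ≥ 0, F(x_t) − F(x_*) ≤ cᵗ·(F(x₀) − F(x_*)) + 3Δη/(2(1−c)). -/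
open scoped RealInnerProductSpace

/-!
Let `g = ∇F(x)` and `d = v - x`. Convexity of `F` and the approximate minimality of `v`
bound the Frank-Wolfe gap: `⟪d, g⟫ ≤ F(x_*) - F(x) + Δ`. Strong convexity of `C` puts the
midpoint of `x` and `v`, pushed by `(α/8)‖d‖²` against `g`, inside `C`; testing the
approximate minimality of `v` there gives `⟪d, g⟫ + (α/4)‖g‖‖d‖² ≤ 2Δ`. Since `‖g‖ ≥ r` and
`τη ≤ αr/4`, this absorbs the quadratic term of the smoothness bound, so one step contracts
the primal gap by `1 - η/2 = c` up to an additive `3ηΔ/2`. Unrolling this recursion gives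
the claim.
-/

section StronglyConvex

variable {E : Type*} [NormedAddCommGroup E]

def IsStronglyConvexSet [NormedSpace ℝ E] (α : ℝ) (C : Set E) : Prop :=
  ∀ x ∈ C, ∀ y ∈ C, ∀ γ : ℝ, γ ∈ Set.Icc (0:ℝ) 1 → ∀ z : E, ‖z‖ = 1 →
    γ • x + (1 - γ) • y + (γ * (1 - γ) * (α / 2) * ‖x - y‖ ^ 2) • z ∈ C

theorem IsStronglyConvexSet.convex [NormedSpace ℝ E] {α : ℝ} {C : Set E}
    (hC : IsStronglyConvexSet α C) : Convex ℝ C := by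
  intro a ha b hb μ ν hμ hν hμν
  obtain rfl : ν = 1 - μ := by linarith
  rcases eq_or_ne a b with rfl | hab
  · simpa [← add_smul] using ha
  have hab : ‖a - b‖ ≠ 0 := norm_ne_zero_iff.mpr (sub_ne_zero.mpr hab)
  -- Pushing the point of parameter `γ` towards `b` by `γ (1 - γ) β ‖a - b‖` lands on the point
  -- of parameter `γ - γ (1 - γ) β`, and this parameter sweeps `[0, 1]`.
  set β := α / 2 * ‖a - b‖ with hβ
  obtain ⟨γ, hγ, rfl⟩ : ∃ γ ∈ Set.Icc (0:ℝ) 1, γ - γ * (1 - γ) * β = μ :=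
    intermediate_value_Icc zero_le_one (by fun_prop) (by simpa using ⟨hμ, by linarith⟩)
  have hz : ‖-(‖a - b‖⁻¹ • (a - b))‖ = 1 := by
    rw [norm_neg, norm_smul, norm_inv, norm_norm, inv_mul_cancel₀ hab]
  convert hC a ha b hb γ hγ _ hz using 1
  have hcoef : γ * (1 - γ) * (α / 2) * ‖a - b‖ ^ 2 * ‖a - b‖⁻¹ = γ * (1 - γ) * β := by
    rw [hβ]
    field_simp
  rw [smul_neg, smul_smul, hcoef]
  module

theorem IsStronglyConvexSet.inner_sub_add_le [InnerProductSpace ℝ E] {α Δ : ℝ} {C : Set E}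
    (hC : IsStronglyConvexSet α C) {g v x : E} (hv : v ∈ C) (hx : x ∈ C)
    (hmin : ∀ u ∈ C, ⟪v, g⟫ ≤ ⟪u, g⟫ + Δ) :
    ⟪v - x, g⟫ + α / 4 * ‖g‖ * ‖v - x‖ ^ 2 ≤ 2 * Δ := by
  rcases eq_or_ne g 0 with rfl | hg
  · simpa using hmin v hv
  have hg : ‖g‖ ≠ 0 := norm_ne_zero_iff.mpr hg
  have hz : ‖-(‖g‖⁻¹ • g)‖ = 1 := by
    rw [norm_neg, norm_smul, norm_inv, norm_norm, inv_mul_cancel₀ hg]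
  have hmid := hmin _ (hC v hv x hx (1 / 2) ⟨by norm_num, by norm_num⟩ _ hz)
  have hzg : ⟪-(‖g‖⁻¹ • g), g⟫ = -‖g‖ := by
    rw [inner_neg_left, real_inner_smul_left, real_inner_self_eq_norm_sq, sq, ← mul_assoc,
      inv_mul_cancel₀ hg, one_mul]
  rw [inner_add_left, inner_add_left, real_inner_smul_left, real_inner_smul_left,
    real_inner_smul_left, hzg] at hmid
  rw [inner_sub_left]
  linarith

end StronglyConvex

section FrankWolfe

variable {E : Type*} [NormedAddCommGroup E] [InnerProductSpace ℝ E] [CompleteSpace E]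

theorem ConvexOn.inner_sub_le_of_hasGradientAt {F : E → ℝ} {g a : E}
    (hF : ConvexOn ℝ Set.univ F) (hg : HasGradientAt F g a) (b : E) :
    ⟪g, b - a⟫ ≤ F b - F a := by
  have hconv : ConvexOn ℝ Set.univ (F ∘ AffineMap.lineMap (k := ℝ) a b) := by
    simpa using hF.comp_affineMap (AffineMap.lineMap a b)
  have hderiv : HasDerivAt (F ∘ AffineMap.lineMap (k := ℝ) a b) ⟪g, b - a⟫ 0 := by
    have hFa := hg.hasFDerivAt
    rw [← AffineMap.lineMap_apply_zero (k := ℝ) a b] at hFa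
    simpa using hFa.comp_hasDerivAt 0 AffineMap.hasDerivAt_lineMap
  simpa [slope_def_field] using
    hconv.le_slope_of_hasDerivAt (Set.mem_univ 0) (Set.mem_univ 1) one_pos hderiv

theorem frankWolfe_step_sub_le {C : Set E} {α τ r Δ η : ℝ} {F : E → ℝ} {x v xstar : E}
    (hC : IsStronglyConvexSet α C) (hα : 0 ≤ α) (hF : ConvexOn ℝ Set.univ F)
    (hFx : DifferentiableAt ℝ F x)
    (hsmooth : ∀ y, F y - F x - ⟪gradient F x, y - x⟫ ≤ τ / 2 * ‖y - x‖ ^ 2)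
    (hx : x ∈ C) (hv : v ∈ C) (hmin : ∀ u ∈ C, ⟪v, gradient F x⟫ ≤ ⟪u, gradient F x⟫ + Δ)
    (hxstar : xstar ∈ C) (hgrad : r ≤ ‖gradient F x‖) (hη : 0 ≤ η) (hητ : τ * η ≤ α * r / 4) :
    F ((1 - η) • x + η • v) - F xstar ≤ (1 - η / 2) * (F x - F xstar) + 3 / 2 * η * Δ := by
  set g := gradient F x
  have hgap : ⟪v - x, g⟫ ≤ F xstar - F x + Δ := by
    have := hF.inner_sub_le_of_hasGradientAt hFx.hasGradientAt xstar
    rw [real_inner_comm] at this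
    rw [inner_sub_left] at this ⊢
    linarith [hmin xstar hxstar]
  have hcurv : τ * η * ‖v - x‖ ^ 2 ≤ 2 * Δ - ⟪v - x, g⟫ := calc
    τ * η * ‖v - x‖ ^ 2 ≤ α / 4 * r * ‖v - x‖ ^ 2 := by gcongr ?_ * _; linarith
    _ ≤ α / 4 * ‖g‖ * ‖v - x‖ ^ 2 := by gcongr
    _ ≤ 2 * Δ - ⟪v - x, g⟫ := by linarith [hC.inner_sub_add_le hv hx hmin]
  have hstep : F ((1 - η) • x + η • v) ≤
      F x + η * ⟪v - x, g⟫ + η / 2 * (τ * η * ‖v - x‖ ^ 2) := by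
    have hy : (1 - η) • x + η • v - x = η • (v - x) := by module
    have := hsmooth ((1 - η) • x + η • v)
    rw [hy, real_inner_smul_right, real_inner_comm, norm_smul, Real.norm_of_nonneg hη,
      mul_pow] at this
    linarith
  nlinarith [mul_le_mul_of_nonneg_left hcurv hη, mul_le_mul_of_nonneg_left hgap hη]

end FrankWolfe

theorem le_pow_mul_add_div_of_le_mul_add {e : ℕ → ℝ} {c b : ℝ} (hc0 : 0 ≤ c) (hc1 : c < 1)
    (hb : 0 ≤ b) (he : ∀ t, e (t + 1) ≤ c * e t + b) (t : ℕ) :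
    e t ≤ c ^ t * e 0 + b / (1 - c) := by
  have hc : 0 < 1 - c := by linarith
  induction t with
  | zero => simp only [pow_zero, one_mul, le_add_iff_nonneg_right]; positivity
  | succ t ih =>
    calc e (t + 1) ≤ c * (c ^ t * e 0 + b / (1 - c)) + b :=
          (he t).trans (by gcongr)
      _ = c ^ (t + 1) * e 0 + b / (1 - c) := by field_simp; ring

theorem max_one_half_one_sub_half (a : ℝ) : max (1 / 2) (1 - a / 2) = 1 - min 1 a / 2 := by
  rcases le_total 1 a with h | h
  · rw [min_eq_left h, max_eq_left (by linarith)]; norm_num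
  · rw [min_eq_right h, max_eq_right (by linarith)]

theorem stmt_0_general {p : ℕ} (C : Set (EuclideanSpace ℝ (Fin p)))
    (αC : ℝ) (hαC : 0 < αC)
    (hCstrong : ∀ x ∈ C, ∀ y ∈ C, ∀ γ : ℝ, γ ∈ Set.Icc (0:ℝ) 1 →
      ∀ z : EuclideanSpace ℝ (Fin p), ‖z‖ = 1 →
        γ • x + (1 - γ) • y + (γ * (1 - γ) * (αC / 2) * ‖x - y‖ ^ 2) • z ∈ C)
    (F : EuclideanSpace ℝ (Fin p) → ℝ)
    (hFconv : ConvexOn ℝ Set.univ F) (hFdiff : Differentiable ℝ F)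
    (τu : ℝ) (hτu : 0 < τu)
    (hFsmooth : ∀ x y : EuclideanSpace ℝ (Fin p),
      F x - F y - ⟪gradient F y, x - y⟫ ≤ τu / 2 * ‖x - y‖ ^ 2)
    (r : ℝ) (hr : 0 < r) (hgrad : ∀ x ∈ C, r ≤ ‖gradient F x‖)
    (xstar : EuclideanSpace ℝ (Fin p)) (hxstar : xstar ∈ C)
    (Δ : ℝ) (hΔ : 0 ≤ Δ) (η c : ℝ)
    (hη : η = min 1 (αC * r / (4 * τu)))
    (hc : c = max (1/2 : ℝ) (1 - αC * r / (8 * τu)))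
    (x v : ℕ → EuclideanSpace ℝ (Fin p)) (hx0 : x 0 ∈ C)
    (hv : ∀ t : ℕ, v t ∈ C ∧
      ∀ u ∈ C, ⟪v t, gradient F (x t)⟫ ≤ ⟪u, gradient F (x t)⟫ + Δ)
    (hstep : ∀ t : ℕ, x (t + 1) = (1 - η) • x t + η • v t) :
    ∀ t : ℕ, F (x t) - F xstar ≤
      c ^ t * (F (x 0) - F xstar) + 3 * Δ * η / (2 * (1 - c)) := by
  have hC : IsStronglyConvexSet αC C := hCstrong
  have hη0 : 0 < η := hη ▸ lt_min one_pos (by positivity)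
  have hη1 : η ≤ 1 := hη ▸ min_le_left _ _
  have hητ : τu * η ≤ αC * r / 4 := by
    have : η ≤ αC * r / (4 * τu) := hη ▸ min_le_right _ _
    rw [le_div_iff₀ (by positivity)] at this
    linarith
  have hc' : c = 1 - η / 2 := by
    rw [hc, hη, ← max_one_half_one_sub_half]
    ring_nf
  have hmem : ∀ t, x t ∈ C := fun t => by
    induction t with
    | zero => exact hx0
    | succ t ih => exact hstep t ▸ hC.convex ih (hv t).1 (by linarith) hη0.le (by ring)
  have hdesc : ∀ t, F (x (t + 1)) - F xstar ≤ c * (F (x t) - F xstar) + 3 / 2 * η * Δ :=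
    fun t => hstep t ▸ hc' ▸ frankWolfe_step_sub_le hC hαC.le hFconv (hFdiff _)
      (hFsmooth · _) (hmem t) (hv t).1 (hv t).2 hxstar (hgrad _ (hmem t)) hη0.le hητ
  intro t
  convert le_pow_mul_add_div_of_le_mul_add (e := fun t => F (x t) - F xstar) (by linarith)
    (by linarith) (by positivity) hdesc t using 2
  rw [mul_comm 2, ← div_div]
  ring

/-- Convergence of the relaxed and accelerated Frank-Wolfe method (Theorem 3.1 /
`ACCFWV3` in the paper): over a compact, strongly convex constraint set, for a convex,
smooth function whose gradient norm is bounded below on the set, the relaxed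
Frank-Wolfe iterates with constant step size `η` converge linearly up to an error
proportional to the relaxation parameter `Δ`. -/
theorem stmt_0 {p : ℕ} (C : Set (EuclideanSpace ℝ (Fin p)))
    (hCcompact : IsCompact C) (αC : ℝ) (hαC : 0 < αC)
    (hCstrong : ∀ x ∈ C, ∀ y ∈ C, ∀ γ : ℝ, γ ∈ Set.Icc (0:ℝ) 1 →
      ∀ z : EuclideanSpace ℝ (Fin p), ‖z‖ = 1 →
        γ • x + (1 - γ) • y + (γ * (1 - γ) * (αC / 2) * ‖x - y‖ ^ 2) • z ∈ C)
    (F : EuclideanSpace ℝ (Fin p) → ℝ)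
    (hFconv : ConvexOn ℝ Set.univ F) (hFdiff : Differentiable ℝ F)
    (τu : ℝ) (hτu : 0 < τu)
    (hFsmooth : ∀ x y : EuclideanSpace ℝ (Fin p),
      F x - F y - ⟪gradient F y, x - y⟫ ≤ τu / 2 * ‖x - y‖ ^ 2)
    (r : ℝ) (hr : 0 < r) (hgrad : ∀ x ∈ C, r ≤ ‖gradient F x‖)
    (xstar : EuclideanSpace ℝ (Fin p)) (hxstar : xstar ∈ C)
    (hmin : ∀ x ∈ C, F xstar ≤ F x)
    (Δ : ℝ) (hΔ : 0 ≤ Δ) (η c : ℝ)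
    (hη : η = min 1 (αC * r / (4 * τu)))
    (hc : c = max (1/2 : ℝ) (1 - αC * r / (8 * τu)))
    (x v : ℕ → EuclideanSpace ℝ (Fin p)) (hx0 : x 0 ∈ C)
    (hv : ∀ t : ℕ, v t ∈ C ∧
      ∀ u ∈ C, ⟪v t, gradient F (x t)⟫ ≤ ⟪u, gradient F (x t)⟫ + Δ)
    (hstep : ∀ t : ℕ, x (t + 1) = (1 - η) • x t + η • v t) :
    ∀ t : ℕ, F (x t) - F xstar ≤
      c ^ t * (F (x 0) - F xstar) + 3 * Δ * η / (2 * (1 - c)) :=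
  stmt_0_general C αC hαC hCstrong F hFconv hFdiff τu hτu hFsmooth r hr hgrad xstar hxstar Δ hΔ η c
    hη hc x v hx0 hv hstep
end

section
/- In the GLM risk setup, with Σ = E[xxᵀ]: (i) R is K_{Φ''}·λ_max(Σ)-smooth over ℝ^p; (ii) if Σ is positive definite and C ⊆ ℝ^p is convex with ‖θ‖₂ ≤ K_B for all θ ∈ C, then R is Φ''(L_x K_B)·λ_min(Σ)-strongly convex over C; (iii) ∇R(θ*) = 0, and if θ* ∈ C then R attains its minimum over C at θ*. -/
open MeasureTheory
open scoped RealInnerProductSpace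

/-!
The linear part of `R` has constant gradient, so the Bregman divergence
`R a - R b - ⟪∇R b, a - b⟫` is the expectation of the scalar Bregman divergence
`Φ ⟪x, a⟫ - Φ ⟪x, b⟫ - Φ' ⟪x, b⟫ ⟪x, a - b⟫` of `Φ`. Second-order Taylor bounds sandwich the
latter between `m/2 ⟪x, a - b⟫²` and `M/2 ⟪x, a - b⟫²`, where `m ≤ Φ'' ≤ M` on the segment between
`⟪x, a⟫` and `⟪x, b⟫`, and `E ⟪x, v⟫² = vᵀ Σ v` turns this into (i) and (ii). On `C` we have
`|⟪x, θ⟫| ≤ L_x K_B`, where `Φ'' ≥ Φ''(L_x K_B)` because `Φ''` is even and decreasing on `[0, ∞)`.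
Differentiating under the integral, `∇R θ = E[(Φ' ⟪x, θ⟫ - Φ' ⟪x, θ*⟫) x]`, which vanishes at
`θ*`; as `Φ'' > 0`, the Bregman divergence at `θ*` is nonnegative, so `θ*` minimizes `R`.
-/

open Set

lemma ConvexOn.add_deriv_mul_sub_le {S : Set ℝ} {g : ℝ → ℝ} (hg : ConvexOn ℝ S g) {s t : ℝ}
    (hs : s ∈ S) (ht : t ∈ S) (hgt : DifferentiableAt ℝ g t) :
    g t + deriv g t * (s - t) ≤ g s := by
  rcases lt_trichotomy s t with hst | rfl | hst
  · have := hg.slope_le_deriv hs ht hst hgt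
    rw [slope_def_field, div_le_iff₀ (sub_pos.mpr hst)] at this
    linarith
  · simp
  · have := hg.deriv_le_slope ht hs hst hgt
    rw [slope_def_field, le_div_iff₀ (sub_pos.mpr hst)] at this
    linarith

lemma mul_sq_le_sub_sub_deriv_mul {f : ℝ → ℝ} (hf : Differentiable ℝ f)
    (hf' : Differentiable ℝ (deriv f)) {c s t : ℝ}
    (hc : ∀ u ∈ uIcc s t, c ≤ deriv (deriv f) u) :
    c / 2 * (s - t) ^ 2 ≤ f s - f t - deriv f t * (s - t) := by
  set g : ℝ → ℝ := fun u => f u - c / 2 * u ^ 2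
  have hg : ∀ u, HasDerivAt g (deriv f u - c * u) u := fun u =>
    ((hf u).hasDerivAt.fun_sub ((hasDerivAt_pow 2 u).const_mul (c / 2))).congr_deriv
      (by ring)
  have hg' : deriv g = fun u => deriv f u - c * u := funext fun u => (hg u).deriv
  have hg'' : ∀ u, HasDerivAt (deriv g) (deriv (deriv f) u - c) u := fun u => by
    rw [hg']
    simpa using (hf' u).hasDerivAt.fun_sub ((hasDerivAt_id u).const_mul c)
  -- `f - c/2 · u²` is convex on the segment, so it lies above its tangent at `t`
  have hconv : ConvexOn ℝ (uIcc s t) g :=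
    convexOn_of_deriv2_nonneg' (convex_uIcc s t)
      (fun u _ => (hg u).differentiableAt.differentiableWithinAt)
      (fun u _ => (hg'' u).differentiableAt.differentiableWithinAt)
      (fun u hu => by simpa [(hg'' u).deriv] using hc u hu)
  have := hconv.add_deriv_mul_sub_le left_mem_uIcc right_mem_uIcc (hg t).differentiableAt
  rw [(hg t).deriv] at this
  simp only [g] at this
  linarith

lemma sub_sub_deriv_mul_le_mul_sq {f : ℝ → ℝ} (hf : Differentiable ℝ f)
    (hf' : Differentiable ℝ (deriv f)) {c s t : ℝ}
    (hc : ∀ u ∈ uIcc s t, deriv (deriv f) u ≤ c) :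
    f s - f t - deriv f t * (s - t) ≤ c / 2 * (s - t) ^ 2 := by
  have hneg : deriv (fun u => -f u) = fun u => -deriv f u := deriv.neg'
  have := mul_sq_le_sub_sub_deriv_mul (f := fun u => -f u) (c := -c) hf.neg
    (by rw [hneg]; exact hf'.neg) (fun u hu => by simpa [hneg] using hc u hu)
  rw [hneg] at this
  linarith

lemma AntitoneOn.apply_le_apply_of_abs_le {g : ℝ → ℝ} (hg : AntitoneOn g (Ici 0))
    (heven : ∀ t, g (-t) = g t) {r u : ℝ} (hur : |u| ≤ r) : g r ≤ g u := by
  have habs : g |u| = g u := by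
    rcases abs_choice u with h | h <;> rw [h]
    exact heven u
  rw [← habs]
  exact hg (abs_nonneg u) ((abs_nonneg u).trans hur) hur

section GLM

variable {Ω E : Type*} [MeasurableSpace Ω] [NormedAddCommGroup E] [InnerProductSpace ℝ E]

noncomputable def glmRisk (μ : Measure Ω) (x : Ω → E) (φ : ℝ → ℝ) (θstar θ : E) : ℝ :=
  ∫ ω, (φ ⟪x ω, θ⟫ - deriv φ ⟪x ω, θstar⟫ * ⟪x ω, θ⟫) ∂μ

lemma integral_mul_inner_eq_inner_integral_smul [CompleteSpace E] {μ : Measure Ω} {x : Ω → E}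
    {g : Ω → ℝ} (hg : Integrable (fun ω => g ω • x ω) μ) (v : E) :
    ∫ ω, g ω * ⟪x ω, v⟫ ∂μ = ⟪∫ ω, g ω • x ω ∂μ, v⟫ := by
  rw [real_inner_comm, ← integral_inner hg]
  simp_rw [real_inner_smul_right, real_inner_comm v]

variable {μ : Measure Ω} [IsFiniteMeasure μ] {x : Ω → E} {L : ℝ} {φ : ℝ → ℝ}

lemma integrable_comp_inner {ψ : ℝ → ℝ} (hψ : Continuous ψ) (hx : AEStronglyMeasurable x μ)
    (hxL : ∀ᵐ ω ∂μ, ‖x ω‖ ≤ L) (θ : E) : Integrable (fun ω => ψ ⟪x ω, θ⟫) μ := by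
  obtain ⟨C, hC⟩ :=
    (isCompact_closedBall (0 : ℝ) (L * ‖θ‖)).exists_bound_of_continuousOn hψ.continuousOn
  refine .of_bound (hψ.comp_aestronglyMeasurable (hx.inner aestronglyMeasurable_const)) C ?_
  filter_upwards [hxL] with ω hω
  refine hC _ (mem_closedBall_zero_iff.mpr ((norm_inner_le_norm _ _).trans ?_))
  gcongr

lemma integrable_comp_inner_smul {ψ : ℝ → ℝ} (hψ : Continuous ψ)
    (hx : AEStronglyMeasurable x μ) (hxL : ∀ᵐ ω ∂μ, ‖x ω‖ ≤ L) (θ : E) :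
    Integrable (fun ω => ψ ⟪x ω, θ⟫ • x ω) μ :=
  (integrable_comp_inner hψ hx hxL θ).smul_bdd L hx hxL

lemma integrable_comp_inner_mul_inner {ψ : ℝ → ℝ} (hψ : Continuous ψ)
    (hx : AEStronglyMeasurable x μ) (hxL : ∀ᵐ ω ∂μ, ‖x ω‖ ≤ L) (θ v : E) :
    Integrable (fun ω => ψ ⟪x ω, θ⟫ * ⟪x ω, v⟫) μ := by
  simpa [real_inner_smul_left] using (integrable_comp_inner_smul hψ hx hxL θ).inner_const (𝕜 := ℝ) v

lemma hasGradientAt_integral_comp_inner [CompleteSpace E] (hφ : ContDiff ℝ 1 φ)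
    (hx : AEStronglyMeasurable x μ) (hxL : ∀ᵐ ω ∂μ, ‖x ω‖ ≤ L) (θ : E) :
    HasGradientAt (fun θ => ∫ ω, φ ⟪x ω, θ⟫ ∂μ) (∫ ω, deriv φ ⟪x ω, θ⟫ • x ω ∂μ) θ := by
  have hφ' : Continuous (deriv φ) := hφ.continuous_deriv le_rfl
  obtain ⟨C, hC⟩ := (isCompact_closedBall (0 : ℝ) (L * (‖θ‖ + 1))).exists_bound_of_continuousOn
    hφ'.continuousOn
  have hF' : HasFDerivAt (fun θ => ∫ ω, φ ⟪x ω, θ⟫ ∂μ)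
      (∫ ω, innerSL ℝ (deriv φ ⟪x ω, θ⟫ • x ω) ∂μ) θ := by
    refine hasFDerivAt_integral_of_dominated_of_fderiv_le (bound := fun _ => C * L)
      (F' := fun θ' ω => innerSL ℝ (deriv φ ⟪x ω, θ'⟫ • x ω))
      (Metric.ball_mem_nhds θ one_pos)
      (.of_forall fun θ => (integrable_comp_inner hφ.continuous hx hxL θ).aestronglyMeasurable)
      (integrable_comp_inner hφ.continuous hx hxL θ)
      ((innerSL ℝ).continuous.comp_aestronglyMeasurable
        (integrable_comp_inner_smul hφ' hx hxL θ).aestronglyMeasurable) ?_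
      (integrable_const _) ?_
    · filter_upwards [hxL] with ω hω θ' hθ'
      have hθ'θ : ‖θ'‖ ≤ ‖θ‖ + 1 := (norm_lt_of_mem_ball hθ').le
      have hmem : ⟪x ω, θ'⟫ ∈ Metric.closedBall (0 : ℝ) (L * (‖θ‖ + 1)) :=
        mem_closedBall_zero_iff.mpr ((norm_inner_le_norm _ _).trans
          (mul_le_mul hω hθ'θ (norm_nonneg _) ((norm_nonneg _).trans hω)))
      rw [innerSL_apply_norm, norm_smul]
      exact mul_le_mul (hC _ hmem) hω (norm_nonneg _) ((norm_nonneg _).trans (hC _ hmem))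
    · filter_upwards with ω θ' _
      rw [map_smul]
      exact ((hφ.differentiable one_ne_zero) _).hasDerivAt.comp_hasFDerivAt θ'
        (innerSL ℝ (x ω)).hasFDerivAt
  rw [(innerSL ℝ).integral_comp_comm (integrable_comp_inner_smul hφ' hx hxL θ)] at hF'
  exact hasGradientAt_iff_hasFDerivAt.mpr hF'

lemma glmRisk_eq [CompleteSpace E] (hφ : ContDiff ℝ 1 φ) (hx : AEStronglyMeasurable x μ)
    (hxL : ∀ᵐ ω ∂μ, ‖x ω‖ ≤ L) (θstar θ : E) :
    glmRisk μ x φ θstar θ =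
      ∫ ω, φ ⟪x ω, θ⟫ ∂μ - ⟪∫ ω, deriv φ ⟪x ω, θstar⟫ • x ω ∂μ, θ⟫ := by
  have hφ' : Continuous (deriv φ) := hφ.continuous_deriv le_rfl
  rw [glmRisk, integral_sub (integrable_comp_inner hφ.continuous hx hxL θ)
    (integrable_comp_inner_mul_inner hφ' hx hxL θstar θ),
    integral_mul_inner_eq_inner_integral_smul (integrable_comp_inner_smul hφ' hx hxL θstar)]

lemma hasGradientAt_glmRisk [CompleteSpace E] (hφ : ContDiff ℝ 1 φ)
    (hx : AEStronglyMeasurable x μ) (hxL : ∀ᵐ ω ∂μ, ‖x ω‖ ≤ L) (θstar θ : E) :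
    HasGradientAt (glmRisk μ x φ θstar)
      ((∫ ω, deriv φ ⟪x ω, θ⟫ • x ω ∂μ) - ∫ ω, deriv φ ⟪x ω, θstar⟫ • x ω ∂μ) θ := by
  rw [funext (glmRisk_eq hφ hx hxL θstar), hasGradientAt_iff_hasFDerivAt, map_sub]
  exact (hasGradientAt_integral_comp_inner hφ hx hxL θ).hasFDerivAt.sub
    (innerSL ℝ _).hasFDerivAt

lemma gradient_glmRisk_self [CompleteSpace E] (hφ : ContDiff ℝ 1 φ)
    (hx : AEStronglyMeasurable x μ) (hxL : ∀ᵐ ω ∂μ, ‖x ω‖ ≤ L) (θstar : E) :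
    gradient (glmRisk μ x φ θstar) θstar = 0 := by
  rw [(hasGradientAt_glmRisk hφ hx hxL θstar θstar).gradient, sub_self]

lemma integrable_comp_inner_sub_sub (hφ : ContDiff ℝ 1 φ) (hx : AEStronglyMeasurable x μ)
    (hxL : ∀ᵐ ω ∂μ, ‖x ω‖ ≤ L) (a b : E) :
    Integrable (fun ω => φ ⟪x ω, a⟫ - φ ⟪x ω, b⟫ - deriv φ ⟪x ω, b⟫ * ⟪x ω, a - b⟫) μ :=
  ((integrable_comp_inner hφ.continuous hx hxL a).sub
    (integrable_comp_inner hφ.continuous hx hxL b)).sub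
    (integrable_comp_inner_mul_inner (hφ.continuous_deriv le_rfl) hx hxL b (a - b))

lemma glmRisk_sub_sub_inner_gradient [CompleteSpace E] (hφ : ContDiff ℝ 1 φ)
    (hx : AEStronglyMeasurable x μ) (hxL : ∀ᵐ ω ∂μ, ‖x ω‖ ≤ L) (θstar a b : E) :
    glmRisk μ x φ θstar a - glmRisk μ x φ θstar b - ⟪gradient (glmRisk μ x φ θstar) b, a - b⟫ =
      ∫ ω, (φ ⟪x ω, a⟫ - φ ⟪x ω, b⟫ - deriv φ ⟪x ω, b⟫ * ⟪x ω, a - b⟫) ∂μ := by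
  have hint := integrable_comp_inner hφ.continuous hx hxL (μ := μ)
  have hφ' : Continuous (deriv φ) := hφ.continuous_deriv le_rfl
  rw [(hasGradientAt_glmRisk hφ hx hxL θstar b).gradient, glmRisk_eq hφ hx hxL,
    glmRisk_eq hφ hx hxL,
    integral_sub (f := fun ω => φ ⟪x ω, a⟫ - φ ⟪x ω, b⟫) ((hint a).sub (hint b))
      (integrable_comp_inner_mul_inner hφ' hx hxL b (a - b)),
    integral_sub (hint a) (hint b),
    integral_mul_inner_eq_inner_integral_smul (integrable_comp_inner_smul hφ' hx hxL b)]
  simp only [inner_sub_left, inner_sub_right]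
  ring

lemma glmRisk_sub_sub_inner_gradient_le [CompleteSpace E] (hφ : ContDiff ℝ 2 φ)
    (hx : AEStronglyMeasurable x μ) (hxL : ∀ᵐ ω ∂μ, ‖x ω‖ ≤ L) {c lam : ℝ} (hc : 0 ≤ c)
    (hφ'' : ∀ t, deriv (deriv φ) t ≤ c) (hlam : ∀ v, ∫ ω, ⟪x ω, v⟫ ^ 2 ∂μ ≤ lam * ‖v‖ ^ 2)
    (θstar a b : E) :
    glmRisk μ x φ θstar a - glmRisk μ x φ θstar b - ⟪gradient (glmRisk μ x φ θstar) b, a - b⟫ ≤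
      c * lam / 2 * ‖a - b‖ ^ 2 := by
  have hφ₁ : ContDiff ℝ 1 φ := hφ.of_le one_le_two
  rw [glmRisk_sub_sub_inner_gradient hφ₁ hx hxL]
  calc _ ≤ ∫ ω, c / 2 * ⟪x ω, a - b⟫ ^ 2 ∂μ := by
        refine integral_mono (integrable_comp_inner_sub_sub hφ₁ hx hxL a b)
          ((integrable_comp_inner (continuous_pow 2) hx hxL _).const_mul _) fun ω => ?_
        rw [inner_sub_right]
        exact sub_sub_deriv_mul_le_mul_sq (hφ₁.differentiable one_ne_zero)
          hφ.differentiable_deriv_two fun u _ => hφ'' u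
    _ = c / 2 * ∫ ω, ⟪x ω, a - b⟫ ^ 2 ∂μ := integral_const_mul _ _
    _ ≤ c / 2 * (lam * ‖a - b‖ ^ 2) := by gcongr; exact hlam _
    _ = c * lam / 2 * ‖a - b‖ ^ 2 := by ring

lemma le_glmRisk_sub_sub_inner_gradient [CompleteSpace E] (hφ : ContDiff ℝ 2 φ)
    (hx : AEStronglyMeasurable x μ) (hxL : ∀ᵐ ω ∂μ, ‖x ω‖ ≤ L) {c lam : ℝ} (hc : 0 ≤ c)
    (hlam : ∀ v, lam * ‖v‖ ^ 2 ≤ ∫ ω, ⟪x ω, v⟫ ^ 2 ∂μ) {θstar a b : E}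
    (hφ'' : ∀ᵐ ω ∂μ, ∀ u ∈ uIcc ⟪x ω, a⟫ ⟪x ω, b⟫, c ≤ deriv (deriv φ) u) :
    c * lam / 2 * ‖a - b‖ ^ 2 ≤
      glmRisk μ x φ θstar a - glmRisk μ x φ θstar b -
        ⟪gradient (glmRisk μ x φ θstar) b, a - b⟫ := by
  have hφ₁ : ContDiff ℝ 1 φ := hφ.of_le one_le_two
  rw [glmRisk_sub_sub_inner_gradient hφ₁ hx hxL]
  calc c * lam / 2 * ‖a - b‖ ^ 2 = c / 2 * (lam * ‖a - b‖ ^ 2) := by ring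
    _ ≤ c / 2 * ∫ ω, ⟪x ω, a - b⟫ ^ 2 ∂μ := by gcongr; exact hlam _
    _ = ∫ ω, c / 2 * ⟪x ω, a - b⟫ ^ 2 ∂μ := (integral_const_mul _ _).symm
    _ ≤ _ := by
        refine integral_mono_ae ((integrable_comp_inner (continuous_pow 2) hx hxL _).const_mul _)
          (integrable_comp_inner_sub_sub hφ₁ hx hxL a b) ?_
        filter_upwards [hφ''] with ω hω
        rw [inner_sub_right]
        exact mul_sq_le_sub_sub_deriv_mul (hφ₁.differentiable one_ne_zero)
          hφ.differentiable_deriv_two hω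

end GLM

theorem stmt_1_general {p : ℕ} {Ω : Type*} [MeasurableSpace Ω]
    (μ : Measure Ω) [IsProbabilityMeasure μ]
    (x : Ω → EuclideanSpace ℝ (Fin p)) (hxmeas : Measurable x)
    (Lx : ℝ) (hxbd : ∀ᵐ ω ∂μ, ‖x ω‖ ≤ Lx)
    (Φ : ℝ → ℝ) (hΦ : ContDiff ℝ 2 Φ)
    (KΦ'' : ℝ)
    (hΦ''pos : ∀ t : ℝ, 0 < deriv (deriv Φ) t)
    (hΦ''bd : ∀ t : ℝ, deriv (deriv Φ) t ≤ KΦ'')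
    (hΦ''even : ∀ t : ℝ, deriv (deriv Φ) (-t) = deriv (deriv Φ) t)
    (hΦ''anti : AntitoneOn (deriv (deriv Φ)) (Set.Ici (0:ℝ)))
    (θstar : EuclideanSpace ℝ (Fin p))
    (R : EuclideanSpace ℝ (Fin p) → ℝ)
    (hR : ∀ θ, R θ = ∫ ω, (Φ ⟪x ω, θ⟫ - deriv Φ ⟪x ω, θstar⟫ * ⟪x ω, θ⟫) ∂μ)
    (lamMax lamMin : ℝ)
    (hlamMax : ∀ v : EuclideanSpace ℝ (Fin p), ∫ ω, ⟪x ω, v⟫ ^ 2 ∂μ ≤ lamMax * ‖v‖ ^ 2)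
    (hlamMin : ∀ v : EuclideanSpace ℝ (Fin p), lamMin * ‖v‖ ^ 2 ≤ ∫ ω, ⟪x ω, v⟫ ^ 2 ∂μ) :
    -- (i) `R` is `K_{Φ''}·λ_max(Σ)`-smooth over `ℝ^p`
    (∀ a b : EuclideanSpace ℝ (Fin p),
      R a - R b - ⟪gradient R b, a - b⟫ ≤ KΦ'' * lamMax / 2 * ‖a - b‖ ^ 2) ∧
    -- (ii) if `Σ ≻ 0` and `C` is convex and contained in the ball of radius `K_B`,
    -- then `R` is `Φ''(L_x·K_B)·λ_min(Σ)`-strongly convex over `C`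
    (0 < lamMin →
      ∀ (C : Set (EuclideanSpace ℝ (Fin p))) (KB : ℝ), Convex ℝ C →
        (∀ θ ∈ C, ‖θ‖ ≤ KB) →
        ∀ a ∈ C, ∀ b ∈ C,
          deriv (deriv Φ) (Lx * KB) * lamMin / 2 * ‖a - b‖ ^ 2 ≤
            R a - R b - ⟪gradient R b, a - b⟫) ∧
    -- (iii) `∇R(θ*) = 0`, and if `θ* ∈ C` then `R` is minimized over `C` at `θ*`
    gradient R θstar = 0 ∧
    (∀ C : Set (EuclideanSpace ℝ (Fin p)), θstar ∈ C → ∀ θ ∈ C, R θstar ≤ R θ) := by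
  obtain rfl : R = glmRisk μ x Φ θstar := funext hR
  have hx : AEStronglyMeasurable x μ := hxmeas.aestronglyMeasurable
  have hΦ₁ : ContDiff ℝ 1 Φ := hΦ.of_le one_le_two
  refine ⟨glmRisk_sub_sub_inner_gradient_le hΦ hx hxbd ((hΦ''pos 0).le.trans (hΦ''bd 0))
      hΦ''bd hlamMax θstar, fun _ C KB _ hCKB a ha b hb => ?_,
    gradient_glmRisk_self hΦ₁ hx hxbd θstar, fun C _ θ _ => ?_⟩
  · refine le_glmRisk_sub_sub_inner_gradient hΦ hx hxbd (hΦ''pos _).le hlamMin ?_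
    filter_upwards [hxbd] with ω hω u hu
    have hC : ∀ θ ∈ C, |⟪x ω, θ⟫| ≤ Lx * KB := fun θ hθ => (abs_real_inner_le_norm _ _).trans
      (mul_le_mul hω (hCKB θ hθ) (norm_nonneg _) ((norm_nonneg _).trans hω))
    have hu' := uIcc_subset_Icc (abs_le.mp (hC a ha)) (abs_le.mp (hC b hb)) hu
    exact hΦ''anti.apply_le_apply_of_abs_le hΦ''even (abs_le.mpr hu')
  · have hconvex := le_glmRisk_sub_sub_inner_gradient (θstar := θstar) (a := θ) (b := θstar)
      hΦ hx hxbd le_rfl (lam := 0) (fun v => by simpa using integral_nonneg fun ω => sq_nonneg _)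
      (.of_forall fun ω u _ => (hΦ''pos u).le)
    rw [gradient_glmRisk_self hΦ₁ hx hxbd] at hconvex
    simpa using hconvex

/-- Smoothness, strong convexity and minimization properties of the GLM population risk
(Lemma `GLM_prelim_lem` in the paper). Here `lamMax` (resp. `lamMin`) plays the role of
`λ_max(Σ)` (resp. `λ_min(Σ)`), characterized through the quadratic form
`v ↦ E[⟨x, v⟩²] = vᵀΣv`; positive definiteness of `Σ` is `0 < lamMin`. -/
theorem stmt_1 {p : ℕ} {Ω : Type*} [MeasurableSpace Ω]
    (μ : Measure Ω) [IsProbabilityMeasure μ]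
    (x : Ω → EuclideanSpace ℝ (Fin p)) (hxmeas : Measurable x)
    (Lx : ℝ) (hxbd : ∀ᵐ ω ∂μ, ‖x ω‖ ≤ Lx)
    (hEx : ∫ ω, x ω ∂μ = 0)
    (Φ : ℝ → ℝ) (hΦ : ContDiff ℝ 2 Φ)
    (KΦ' KΦ'' : ℝ)
    (hΦ' : ∀ t : ℝ, |deriv Φ t| ≤ KΦ')
    (hΦ''pos : ∀ t : ℝ, 0 < deriv (deriv Φ) t)
    (hΦ''bd : ∀ t : ℝ, deriv (deriv Φ) t ≤ KΦ'')
    (hΦ''even : ∀ t : ℝ, deriv (deriv Φ) (-t) = deriv (deriv Φ) t)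
    (hΦ''anti : AntitoneOn (deriv (deriv Φ)) (Set.Ici (0:ℝ)))
    (θstar : EuclideanSpace ℝ (Fin p))
    (R : EuclideanSpace ℝ (Fin p) → ℝ)
    (hR : ∀ θ, R θ = ∫ ω, (Φ ⟪x ω, θ⟫ - deriv Φ ⟪x ω, θstar⟫ * ⟪x ω, θ⟫) ∂μ)
    (lamMax lamMin : ℝ)
    (hlamMax : ∀ v : EuclideanSpace ℝ (Fin p), ∫ ω, ⟪x ω, v⟫ ^ 2 ∂μ ≤ lamMax * ‖v‖ ^ 2)
    (hlamMin : ∀ v : EuclideanSpace ℝ (Fin p), lamMin * ‖v‖ ^ 2 ≤ ∫ ω, ⟪x ω, v⟫ ^ 2 ∂μ) :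
    -- (i) `R` is `K_{Φ''}·λ_max(Σ)`-smooth over `ℝ^p`
    (∀ a b : EuclideanSpace ℝ (Fin p),
      R a - R b - ⟪gradient R b, a - b⟫ ≤ KΦ'' * lamMax / 2 * ‖a - b‖ ^ 2) ∧
    -- (ii) if `Σ ≻ 0` and `C` is convex and contained in the ball of radius `K_B`,
    -- then `R` is `Φ''(L_x·K_B)·λ_min(Σ)`-strongly convex over `C`
    (0 < lamMin →
      ∀ (C : Set (EuclideanSpace ℝ (Fin p))) (KB : ℝ), Convex ℝ C →
        (∀ θ ∈ C, ‖θ‖ ≤ KB) →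
        ∀ a ∈ C, ∀ b ∈ C,
          deriv (deriv Φ) (Lx * KB) * lamMin / 2 * ‖a - b‖ ^ 2 ≤
            R a - R b - ⟪gradient R b, a - b⟫) ∧
    -- (iii) `∇R(θ*) = 0`, and if `θ* ∈ C` then `R` is minimized over `C` at `θ*`
    gradient R θstar = 0 ∧
    (∀ C : Set (EuclideanSpace ℝ (Fin p)), θstar ∈ C → ∀ θ ∈ C, R θstar ≤ R θ) :=
  stmt_1_general μ x hxmeas Lx hxbd Φ hΦ KΦ'' hΦ''pos hΦ''bd hΦ''even hΦ''anti θstar R hR lamMax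
    lamMin hlamMax hlamMin
end

section
/- Let τ = 1/1000 and let p, w, k be positive integers with k ≥ τ·w·p. Let x¹,…,x^w ∈ {−1,1}^p and let W ⊆ {1,…,p} with |W| ≥ (1−τ)p be such that for each j ∈ W the j-th coordinate is the same across all the vectors x¹,…,x^w, with common value s_j ∈ {−1,1} (consensus columns). Let α₂ ∈ (0,1) and define L(θ) = Σ_{l=1}^w (1 − θᵀx^l)² + k‖θ‖₂² for θ ∈ ℝ^p. If θ ∈ ℝ^p satisfies L(θ) < 1.1·τ·α₂²·w, then |{ j ∈ W : sgn(θ_j) = s_j }| ≥ 3p/4. -/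
open scoped RealInnerProductSpace Classical

/-!
Write `n = ‖θ‖²`. The ridge term gives `τ w p n ≤ k n < 1.1 τ w`, so `n p < 1.1`, and averaging
the loss over the rows gives a row `x^l` with `(1 - ⟪θ, x^l⟫)² < 1.1 τ`. On the consensus columns
`⟪θ, x^l⟫` equals `A = Σ_{j ∈ W} θ_j s_j`; by Cauchy–Schwarz the remaining at most `τ p` columns
contribute at most `√(n τ p) < √(1.1 τ)`, whence `A > 0.93`. Only the columns where `sgn θ_j = s_j`
contribute positively to `A`, so Cauchy–Schwarz again gives `0.93² ≤ A² ≤ n · #G` for the set `G`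
of those columns, and with `n p < 1.1` this forces `#G ≥ 3p/4`.
-/

open Finset

variable {ι : Type*}

lemma sq_sum_mul_le_norm_sq_mul_card [Fintype ι] (θ : EuclideanSpace ℝ ι) (S : Finset ι)
    (b : ι → ℝ) (hb : ∀ j ∈ S, |b j| ≤ 1) :
    (∑ j ∈ S, θ j * b j) ^ 2 ≤ ‖θ‖ ^ 2 * #S := by
  have hterm : ∀ j ∈ S, (θ j * b j) ^ 2 ≤ θ j ^ 2 := fun j hj => by
    rw [mul_pow, ← sq_abs (b j)]
    exact mul_le_of_le_one_right (sq_nonneg _) (pow_le_one₀ (abs_nonneg _) (hb j hj))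
  calc (∑ j ∈ S, θ j * b j) ^ 2 ≤ #S * ∑ j ∈ S, (θ j * b j) ^ 2 := sq_sum_le_card_mul_sum_sq
    _ ≤ #S * ∑ j, θ j ^ 2 := by
      gcongr
      exact (sum_le_sum hterm).trans
        (sum_le_sum_of_subset_of_nonneg (subset_univ S) fun j _ _ => sq_nonneg _)
    _ = ‖θ‖ ^ 2 * #S := by rw [EuclideanSpace.real_norm_sq_eq, mul_comm]

lemma sq_inner_sub_sum_mul_le [Fintype ι] [DecidableEq ι] (θ y : EuclideanSpace ℝ ι)
    (W : Finset ι) (s : ι → ℝ) (hy : ∀ j, |y j| ≤ 1) (hys : ∀ j ∈ W, y j = s j) :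
    (⟪θ, y⟫ - ∑ j ∈ W, θ j * s j) ^ 2 ≤ ‖θ‖ ^ 2 * #Wᶜ := by
  have hsplit : ⟪θ, y⟫ - ∑ j ∈ W, θ j * s j = ∑ j ∈ Wᶜ, θ j * y j := by
    have hinner : ⟪θ, y⟫ = ∑ j, θ j * y j := by simp [PiLp.inner_apply, mul_comm]
    rw [hinner, ← sum_add_sum_compl W, sum_congr rfl fun j hj => by rw [hys j hj]]
    ring
  rw [hsplit]
  exact sq_sum_mul_le_norm_sq_mul_card θ Wᶜ y fun j _ => hy j

lemma mul_nonpos_of_sign_ne {t s : ℝ} (hs : s = 1 ∨ s = -1) (h : Real.sign t ≠ s) :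
    t * s ≤ 0 := by
  rcases hs with rfl | rfl
  · exact (mul_one t).le.trans (not_lt.mp fun ht => h (Real.sign_of_pos ht))
  · exact (mul_neg_one t).le.trans (neg_nonpos.mpr (not_lt.mp fun ht => h (Real.sign_of_neg ht)))

lemma sum_mul_le_sum_filter_sign_eq (θ s : ι → ℝ) (W : Finset ι)
    (hs : ∀ j ∈ W, s j = 1 ∨ s j = -1) :
    ∑ j ∈ W, θ j * s j ≤ ∑ j ∈ W with Real.sign (θ j) = s j, θ j * s j := by
  rw [← sum_filter_add_sum_filter_not W fun j => Real.sign (θ j) = s j]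
  refine add_le_of_nonpos_right (sum_nonpos fun j hj => ?_)
  obtain ⟨hjW, hne⟩ := mem_filter.mp hj
  exact mul_nonpos_of_sign_ne (hs j hjW) hne

theorem stmt_4_general {p w k : ℕ}
    (τ : ℝ) (hτ : τ = 1 / 1000) (hkwp : τ * w * p ≤ (k : ℝ))
    (x : Fin w → EuclideanSpace ℝ (Fin p))
    (hx : ∀ l j, x l j = 1 ∨ x l j = -1)
    (W : Finset (Fin p)) (hW : (1 - τ) * p ≤ (W.card : ℝ))
    (s : Fin p → ℝ)
    (hs : ∀ j ∈ W, (s j = 1 ∨ s j = -1) ∧ ∀ l, x l j = s j)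
    (α₂ : ℝ) (hα₂ : α₂ ∈ Set.Ioo (0:ℝ) 1)
    (θ : EuclideanSpace ℝ (Fin p))
    (hL : (∑ l, (1 - ⟪θ, x l⟫) ^ 2) + (k : ℝ) * ‖θ‖ ^ 2 < 1.1 * τ * α₂ ^ 2 * w) :
    3 * (p : ℝ) / 4 ≤ ((W.filter fun j => Real.sign (θ j) = s j).card : ℝ) := by
  subst hτ
  have hα_sq : α₂ ^ 2 < 1 := pow_lt_one₀ hα₂.1.le hα₂.2 two_ne_zero
  have hloss : 0 ≤ ∑ l, (1 - ⟪θ, x l⟫) ^ 2 := sum_nonneg fun l _ => sq_nonneg _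
  have hnorm : 0 ≤ ‖θ‖ ^ 2 := sq_nonneg _
  have hnorm_p : ‖θ‖ ^ 2 * p < 1.1 := by
    have hw : (0 : ℝ) < w := by nlinarith [mul_nonneg k.cast_nonneg hnorm]
    nlinarith [mul_le_mul_of_nonneg_right hkwp hnorm]
  obtain ⟨l, -, hl⟩ : ∃ l ∈ univ, (1 - ⟪θ, x l⟫) ^ 2 < 1.1 * (1 / 1000) := by
    refine exists_lt_of_sum_lt ?_
    rw [sum_const, card_univ, Fintype.card_fin, nsmul_eq_mul]
    nlinarith
  set A := ∑ j ∈ W, θ j * s j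
  have hrest : (⟪θ, x l⟫ - A) ^ 2 < 1.1 * (1 / 1000) := by
    have hcompl : (#Wᶜ : ℝ) ≤ p / 1000 := by
      rw [card_compl, Fintype.card_fin, Nat.cast_sub (card_le_univ W |>.trans_eq (by simp))]
      linarith
    have hCS : (⟪θ, x l⟫ - A) ^ 2 ≤ ‖θ‖ ^ 2 * #Wᶜ := sq_inner_sub_sum_mul_le θ (x l) W s
      (fun j => by rcases hx l j with h | h <;> simp [h]) fun j hj => (hs j hj).2 l
    nlinarith
  have hA : 0.93 ≤ A := by
    have h₁ := abs_lt_of_sq_lt_sq' (b := (0.035 : ℝ)) (hl.trans_le (by norm_num)) (by norm_num)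
    have h₂ := abs_lt_of_sq_lt_sq' (b := (0.035 : ℝ)) (hrest.trans_le (by norm_num)) (by norm_num)
    linarith [h₁.2, h₂.1]
  have hG : A ^ 2 ≤ ‖θ‖ ^ 2 * #(W.filter fun j => Real.sign (θ j) = s j) := by
    refine (pow_le_pow_left₀ (by linarith) (sum_mul_le_sum_filter_sign_eq θ s W
      fun j hj => (hs j hj).1) 2).trans (sq_sum_mul_le_norm_sq_mul_card θ _ s fun j hj => ?_)
    rcases (hs j (mem_filter.mp hj).1).1 with h | h <;> simp [h]
  nlinarith [mul_le_mul_of_nonneg_right hG p.cast_nonneg]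

/-- Sign-agreement lemma for the fingerprinting lower-bound construction
(Lemma `ERM_Dist_Free_LB_Helper` in the paper): if the un-normalized ridge objective
`L(θ) = Σ_{l=1}^w (1 − θᵀx^l)² + k‖θ‖₂²` is below `1.1·τ·α₂²·w`, then the sign of `θ`
agrees with the consensus sign on at least `3p/4` of the consensus columns. -/
theorem stmt_4 {p w k : ℕ} (hp : 0 < p) (hw : 0 < w) (hk : 0 < k)
    (τ : ℝ) (hτ : τ = 1 / 1000) (hkwp : τ * w * p ≤ (k : ℝ))
    (x : Fin w → EuclideanSpace ℝ (Fin p))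
    (hx : ∀ l j, x l j = 1 ∨ x l j = -1)
    (W : Finset (Fin p)) (hW : (1 - τ) * p ≤ (W.card : ℝ))
    (s : Fin p → ℝ)
    (hs : ∀ j ∈ W, (s j = 1 ∨ s j = -1) ∧ ∀ l, x l j = s j)
    (α₂ : ℝ) (hα₂ : α₂ ∈ Set.Ioo (0:ℝ) 1)
    (θ : EuclideanSpace ℝ (Fin p))
    (hL : (∑ l, (1 - ⟪θ, x l⟫) ^ 2) + (k : ℝ) * ‖θ‖ ^ 2 < 1.1 * τ * α₂ ^ 2 * w) :
    3 * (p : ℝ) / 4 ≤ ((W.filter fun j => Real.sign (θ j) = s j).card : ℝ) :=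
  stmt_4_general τ hτ hkwp x hx W hW s hs α₂ hα₂ θ hL
end

section
/- Let τ = 1/1000 and let p, w, k be positive integers with k ≤ τ·w·p (the paper takes k = τwp). Let x¹,…,x^w ∈ {−1,1}^p be such that there is a set W ⊆ {1,…,p} with |W| ≥ (1−τ)p of consensus columns (for each j ∈ W the j-th coordinate is the same across x¹,…,x^w). Let z₁,…,z_k ∈ {−1,1}^p satisfy Σ_{j=1}^k z_j z_jᵀ = k·I_p. Form the dataset D_n of n = w + k covariate–response pairs consisting of (x^l, 1) for l = 1,…,w and (z_j, 0) for j = 1,…,k. Let 0 < α₁ < √(1−τ)/(1+τ), let L(θ, D_n) = (1/(2n)) Σ over the n pairs of (response − covariateᵀθ)², let α_C = √p/α₁, let β_L = (1/n)‖Σ over all n covariates u of u·uᵀ‖₂ (operator norm), and let 0 < S₁ ≤ (√(1−τ) − (1+τ)α₁)/(α₁(1+τ)). Then every pair in D_n has |response| ≤ 1 and ‖covariate‖∞ ≤ 1, and inf_{‖θ‖₂ ≤ α₁/√p} α_C·‖∇L(θ, D_n)‖₂ / β_L ≥ S₁. -/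
open scoped RealInnerProductSpace

/-!
Test the gradient against the consensus direction `v` (the common signs on `W`, zero
elsewhere). Every consensus row has `⟪xˡ, v⟫ = |W| = ‖v‖²`, while the rows `z_j`, forming a tight
frame, contribute only `k⟪θ, v⟫`. Hence `‖∇L(θ)‖‖v‖ ≥ -⟪∇L(θ), v⟫ ≥ (w(1-α₁)‖v‖² - kα₁‖v‖/√p)/n`,
and `‖v‖ ≥ √((1-τ)p)`, `k ≤ τwp` turn this into `√p‖∇L(θ)‖ ≥ wp(√(1-τ) - (1+τ)α₁)/n`.
On the other side Cauchy–Schwarz and the tight-frame identity give `β_L ≤ (wp + k)/n ≤ (1+τ)wp/n`.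
-/

section TightFrame

variable {E κ : Type*} [NormedAddCommGroup E] [InnerProductSpace ℝ E] [Fintype κ]
  {z : κ → E} {c : ℝ}

theorem sum_inner_mul_inner_of_tightFrame (hz : ∀ v, ∑ j, ⟪z j, v⟫ • z j = c • v) (θ v : E) :
    ∑ j, ⟪z j, θ⟫ * ⟪z j, v⟫ = c * ⟪θ, v⟫ := by
  rw [← real_inner_smul_left, ← hz, sum_inner]
  simp only [real_inner_smul_left]

theorem sum_inner_sq_of_tightFrame (hz : ∀ v, ∑ j, ⟪z j, v⟫ • z j = c • v) (v : E) :
    ∑ j, ⟪z j, v⟫ ^ 2 = c * ‖v‖ ^ 2 := by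
  simp only [sq, sum_inner_mul_inner_of_tightFrame hz, real_inner_self_eq_norm_mul_norm]

end TightFrame

section SignVectors

variable {ι : Type*} [Fintype ι]

theorem abs_le_one_of_eq_one_or_eq_neg_one {a : ℝ} (ha : a = 1 ∨ a = -1) : |a| ≤ 1 := by
  rcases ha with rfl | rfl <;> norm_num

theorem EuclideanSpace.norm_eq_sqrt_card_of_sign {x : EuclideanSpace ℝ ι}
    (hx : ∀ i, x i = 1 ∨ x i = -1) : ‖x‖ = √(Fintype.card ι) := by
  have h : ∀ i, x i ^ 2 = 1 := fun i => by rcases hx i with h | h <;> simp [h]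
  simp [EuclideanSpace.norm_eq, h]

def consensusVector [DecidableEq ι] (W : Finset ι) (s : ι → ℝ) : EuclideanSpace ℝ ι :=
  WithLp.toLp 2 fun j => if j ∈ W then s j else 0

variable [DecidableEq ι] {W : Finset ι} {s : ι → ℝ}

theorem inner_consensusVector (hs : ∀ j ∈ W, s j = 1 ∨ s j = -1) {x : EuclideanSpace ℝ ι}
    (hx : ∀ j ∈ W, x j = s j) : ⟪x, consensusVector W s⟫ = W.card := by
  have h : ∑ j ∈ W, s j * x j = ∑ j ∈ W, 1 := Finset.sum_congr rfl fun j hj => by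
    rcases hs j hj with h | h <;> simp [hx j hj, h]
  simp [PiLp.inner_apply, consensusVector, h]

theorem norm_consensusVector (hs : ∀ j ∈ W, s j = 1 ∨ s j = -1) :
    ‖consensusVector W s‖ = √W.card := by
  have hv : ∀ j ∈ W, consensusVector W s j = s j := fun j hj => by simp [consensusVector, hj]
  rw [← inner_consensusVector hs hv, real_inner_self_eq_norm_sq, Real.sqrt_sq (norm_nonneg _)]

end SignVectors

section LeastSquares

variable {E ι κ : Type*} [NormedAddCommGroup E] [InnerProductSpace ℝ E] [Fintype ι] [Fintype κ]
  {x : ι → E} {z : κ → E} {c : ℝ}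

theorem le_norm_gradient_of_inner_eq_norm_sq (hz : ∀ v, ∑ j, ⟪z j, v⟫ • z j = c • v)
    (hc : 0 ≤ c) {v θ : E} {α : ℝ} (hxv : ∀ l, ⟪x l, v⟫ = ‖v‖ ^ 2) (hxθ : ∀ l, ⟪x l, θ⟫ ≤ α) :
    Fintype.card ι * (1 - α) * ‖v‖ - c * ‖θ‖ ≤
      ‖(∑ l, (⟪x l, θ⟫ - 1) • x l) + ∑ j, ⟪z j, θ⟫ • z j‖ := by
  set G := (∑ l, (⟪x l, θ⟫ - 1) • x l) + ∑ j, ⟪z j, θ⟫ • z j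
  have hGv : ⟪G, v⟫ = (∑ l, ⟪x l, θ⟫ - Fintype.card ι) * ‖v‖ ^ 2 + c * ⟪θ, v⟫ := by
    simp only [G, inner_add_left, sum_inner, real_inner_smul_left, hxv, ← Finset.sum_mul,
      sum_inner_mul_inner_of_tightFrame hz, Finset.sum_sub_distrib]
    simp
  have hsum : ∑ l, ⟪x l, θ⟫ ≤ Fintype.card ι * α := by
    simpa using Finset.sum_le_sum fun l (_ : l ∈ Finset.univ) => hxθ l
  have hθv : c * ⟪θ, v⟫ ≤ c * (‖θ‖ * ‖v‖) := mul_le_mul_of_nonneg_left (real_inner_le_norm _ _) hc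
  have hGv' : -(‖G‖ * ‖v‖) ≤ ⟪G, v⟫ := neg_le_of_abs_le (abs_real_inner_le_norm _ _)
  rcases (norm_nonneg v).eq_or_lt with hv | hv
  · rw [← hv]
    nlinarith [norm_nonneg G, norm_nonneg θ]
  · refine le_of_mul_le_mul_right ?_ hv
    nlinarith [mul_le_mul_of_nonneg_right hsum (sq_nonneg ‖v‖)]

variable {N β : ℝ}

theorem isLUB_quadraticForm_bounds [Nontrivial E] (hz : ∀ v, ∑ j, ⟪z j, v⟫ • z j = c • v)
    (hc : 0 ≤ c) (hN : 0 ≤ N)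
    (hβ : IsLUB {b : ℝ | ∃ v : E, ‖v‖ ≤ 1 ∧
      b = N⁻¹ * ((∑ l, ⟪x l, v⟫ ^ 2) + ∑ j, ⟪z j, v⟫ ^ 2)} β) :
    N⁻¹ * c ≤ β ∧ β ≤ N⁻¹ * ((∑ l, ‖x l‖ ^ 2) + c) := by
  refine ⟨?_, hβ.2 ?_⟩
  · obtain ⟨v, hv⟩ := exists_norm_eq E zero_le_one
    refine (hβ.1 ⟨v, hv.le, rfl⟩).trans' ?_
    rw [sum_inner_sq_of_tightFrame hz, hv]
    gcongr
    simp only [one_pow, mul_one, le_add_iff_nonneg_left]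
    positivity
  · rintro b ⟨v, hv, rfl⟩
    have hv2 : ‖v‖ ^ 2 ≤ 1 := pow_le_one₀ (norm_nonneg v) hv
    have hx : ∀ l, ⟪x l, v⟫ ^ 2 ≤ ‖x l‖ ^ 2 := fun l => by
      rw [← sq_abs]
      calc |⟪x l, v⟫| ^ 2 ≤ (‖x l‖ * ‖v‖) ^ 2 := by gcongr; exact abs_real_inner_le_norm _ _
        _ ≤ ‖x l‖ ^ 2 := by rw [mul_pow]; exact mul_le_of_le_one_right (by positivity) hv2
    rw [sum_inner_sq_of_tightFrame hz]
    exact mul_le_mul_of_nonneg_left (add_le_add (Finset.sum_le_sum fun l _ => hx l)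
      (mul_le_of_le_one_right hc hv2)) (inv_nonneg.2 hN)

end LeastSquares

section Fingerprinting

variable {ι : Type*} [Fintype ι] {w k : ℕ} {x : Fin w → EuclideanSpace ℝ ι}
  {z : Fin k → EuclideanSpace ℝ ι}

theorem isLUB_quadraticForm_bounds_of_sign_rows [Nonempty ι] (hx : ∀ l i, x l i = 1 ∨ x l i = -1)
    (hz : ∀ v, ∑ j, ⟪z j, v⟫ • z j = (k : ℝ) • v) (hk : 0 < k) {N β : ℝ} (hN : 0 < N)
    (hβ : IsLUB {b : ℝ | ∃ v : EuclideanSpace ℝ ι, ‖v‖ ≤ 1 ∧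
      b = N⁻¹ * ((∑ l, ⟪x l, v⟫ ^ 2) + ∑ j, ⟪z j, v⟫ ^ 2)} β) :
    0 < β ∧ β ≤ (w * Fintype.card ι + k) / N := by
  obtain ⟨hlo, hhi⟩ := isLUB_quadraticForm_bounds hz (Nat.cast_nonneg k) hN.le hβ
  refine ⟨lt_of_lt_of_le (by positivity) hlo, hhi.trans_eq ?_⟩
  simp [EuclideanSpace.norm_eq_sqrt_card_of_sign (hx _), inv_mul_eq_div]

theorem le_sqrt_card_mul_norm_gradient [DecidableEq ι] {τ α : ℝ} (hτ : 0 ≤ τ) (hτ1 : τ ≤ 1)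
    (hx : ∀ l i, x l i = 1 ∨ x l i = -1) {W : Finset ι} (hW : (1 - τ) * Fintype.card ι ≤ W.card)
    {s : ι → ℝ} (hs : ∀ j ∈ W, (s j = 1 ∨ s j = -1) ∧ ∀ l, x l j = s j)
    (hz : ∀ v, ∑ j, ⟪z j, v⟫ • z j = (k : ℝ) • v) (hkw : (k : ℝ) ≤ τ * w * Fintype.card ι)
    (hα : 0 ≤ α) (hα1 : α ≤ 1) {θ : EuclideanSpace ℝ ι} (hθ : √(Fintype.card ι) * ‖θ‖ ≤ α) :
    (√(1 - τ) - (1 + τ) * α) * (w * Fintype.card ι) ≤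
      √(Fintype.card ι) * ‖(∑ l, (⟪x l, θ⟫ - 1) • x l) + ∑ j, ⟪z j, θ⟫ • z j‖ := by
  set p : ℝ := (Fintype.card ι : ℝ)
  set u := √p
  set q := √(1 - τ)
  have hu2 : u ^ 2 = p := Real.sq_sqrt (Nat.cast_nonneg _)
  have hq1 : q ≤ 1 := Real.sqrt_le_one.2 (by linarith)
  have hxnorm : ∀ l, ‖x l‖ = u := fun l => EuclideanSpace.norm_eq_sqrt_card_of_sign (hx l)
  set v := consensusVector W s
  have hv : q * u ≤ ‖v‖ := by
    rw [norm_consensusVector (fun j hj => (hs j hj).1), ← Real.sqrt_mul (by linarith)]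
    exact Real.sqrt_le_sqrt hW
  have hG := le_norm_gradient_of_inner_eq_norm_sq hz (Nat.cast_nonneg k) (v := v) (α := α)
    (fun l => by
      rw [inner_consensusVector (fun j hj => (hs j hj).1) (fun j hj => (hs j hj).2 l),
        norm_consensusVector (fun j hj => (hs j hj).1), Real.sq_sqrt (Nat.cast_nonneg _)])
    (fun l => (real_inner_le_norm _ _).trans (by rwa [hxnorm]))
  rw [Fintype.card_fin] at hG
  calc (q - (1 + τ) * α) * (w * p) ≤ w * (1 - α) * q * p - τ * w * p * α := by
        linarith [mul_nonneg (mul_nonneg (by positivity : (0 : ℝ) ≤ w * p) hα)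
          (sub_nonneg.2 hq1)]
    _ = w * (1 - α) * (q * u) * u - τ * w * p * α := by rw [← hu2]; ring
    _ ≤ w * (1 - α) * ‖v‖ * u - k * (u * ‖θ‖) := by gcongr
    _ ≤ u * _ := by linarith [mul_le_mul_of_nonneg_left hG (Real.sqrt_nonneg p)]

end Fingerprinting

theorem stmt_5_general {p w k : ℕ} (hp : 0 < p) (hk : 0 < k)
    (τ : ℝ) (hτ : τ = 1 / 1000) (hkwp : (k : ℝ) ≤ τ * w * p)
    (n : ℕ) (hn : n = w + k)
    (x : Fin w → EuclideanSpace ℝ (Fin p))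
    (hx : ∀ l j, x l j = 1 ∨ x l j = -1)
    (W : Finset (Fin p)) (hW : (1 - τ) * p ≤ (W.card : ℝ))
    (s : Fin p → ℝ)
    (hs : ∀ j ∈ W, (s j = 1 ∨ s j = -1) ∧ ∀ l, x l j = s j)
    (z : Fin k → EuclideanSpace ℝ (Fin p))
    (hz : ∀ j i, z j i = 1 ∨ z j i = -1)
    (hzorth : ∀ v : EuclideanSpace ℝ (Fin p), ∑ j, ⟪z j, v⟫ • z j = (k : ℝ) • v)
    (α₁ : ℝ) (hα₁pos : 0 < α₁) (hα₁ : α₁ < Real.sqrt (1 - τ) / (1 + τ))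
    (αC : ℝ) (hαC : αC = Real.sqrt p / α₁)
    (gradL : EuclideanSpace ℝ (Fin p) → EuclideanSpace ℝ (Fin p))
    (hgradL : ∀ θ, gradL θ = (n : ℝ)⁻¹ •
      ((∑ l, (⟪x l, θ⟫ - 1) • x l) + ∑ j, ⟪z j, θ⟫ • z j))
    (βL : ℝ)
    (hβL : IsLUB {c : ℝ | ∃ v : EuclideanSpace ℝ (Fin p), ‖v‖ ≤ 1 ∧
      c = (n : ℝ)⁻¹ * ((∑ l, ⟪x l, v⟫ ^ 2) + ∑ j, ⟪z j, v⟫ ^ 2)} βL)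
    (S₁ : ℝ) (hS₁pos : 0 < S₁)
    (hS₁ : S₁ ≤ (Real.sqrt (1 - τ) - (1 + τ) * α₁) / (α₁ * (1 + τ))) :
    -- responses of the dataset are bounded by 1 in absolute value
    (|(1 : ℝ)| ≤ 1 ∧ |(0 : ℝ)| ≤ 1) ∧
    -- covariates are bounded by 1 in the sup-norm
    (∀ l j, |x l j| ≤ 1) ∧ (∀ j i, |z j i| ≤ 1) ∧
    -- the uniform gradient lower bound over the ball of radius `α₁/√p`
    (∀ θ : EuclideanSpace ℝ (Fin p), ‖θ‖ ≤ α₁ / Real.sqrt p →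
      S₁ ≤ αC * ‖gradL θ‖ / βL) := by
  subst hαC hn
  have hτ0 : 0 ≤ τ := by norm_num [hτ]
  have hN : (0 : ℝ) < ((w + k : ℕ) : ℝ) := Nat.cast_pos.2 (by omega)
  have hu : 0 < √(p : ℝ) := Real.sqrt_pos.2 (Nat.cast_pos.2 hp)
  have hα₁le : α₁ ≤ 1 := hα₁.le.trans <| (div_le_self (Real.sqrt_nonneg _) (by linarith)).trans
    (Real.sqrt_le_one.2 (by linarith))
  refine ⟨by norm_num, fun l j => abs_le_one_of_eq_one_or_eq_neg_one (hx l j),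
    fun j i => abs_le_one_of_eq_one_or_eq_neg_one (hz j i), fun θ hθ => ?_⟩
  have : Nonempty (Fin p) := ⟨⟨0, hp⟩⟩
  obtain ⟨hβpos, hβle⟩ := isLUB_quadraticForm_bounds_of_sign_rows hx hzorth hk hN hβL
  have hG := le_sqrt_card_mul_norm_gradient hτ0 (by norm_num [hτ]) hx (by simpa using hW) hs
    hzorth (by simpa using hkwp) hα₁pos.le hα₁le (θ := θ) (by simpa [le_div_iff₀' hu] using hθ)
  simp only [Fintype.card_fin] at hβle hG
  rw [le_div_iff₀ hβpos]
  calc S₁ * βL ≤ (√(1 - τ) - (1 + τ) * α₁) / (α₁ * (1 + τ)) * ((1 + τ) * (w * p) / (w + k : ℕ)) :=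
        mul_le_mul hS₁ (hβle.trans (by gcongr; linarith)) hβpos.le (hS₁pos.le.trans hS₁)
    _ = (√(1 - τ) - (1 + τ) * α₁) * (w * p) / α₁ / (w + k : ℕ) := by field_simp
    _ ≤ √p * ‖(∑ l, (⟪x l, θ⟫ - 1) • x l) + ∑ j, ⟪z j, θ⟫ • z j‖ / α₁ / (w + k : ℕ) := by gcongr
    _ = √p / α₁ * ‖gradL θ‖ := by
      rw [hgradL, norm_smul, norm_inv, Real.norm_natCast]
      ring

/-- Proposition `MatchData` in the paper: the fingerprinting dataset (consensus rows with
response 1, orthogonal rows with response 0) satisfies the boundedness conditions and the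
uniform gradient lower bound `inf_{‖θ‖₂ ≤ α₁/√p} α_C·‖∇L(θ, D_n)‖₂/β_L ≥ S₁`.
Here `β_L = (1/n)‖Σ u uᵀ‖₂` is characterized via
`IsLUB` of the values of the quadratic form `v ↦ (1/n)·Σ ⟨u, v⟩²` over the unit ball,
and `∇L(θ, D_n) = (1/n)·Σ (uᵀθ − y)·u` is the mean squared error loss gradient. -/
theorem stmt_5 {p w k : ℕ} (hp : 0 < p) (hw : 0 < w) (hk : 0 < k)
    (τ : ℝ) (hτ : τ = 1 / 1000) (hkwp : (k : ℝ) ≤ τ * w * p)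
    (n : ℕ) (hn : n = w + k)
    (x : Fin w → EuclideanSpace ℝ (Fin p))
    (hx : ∀ l j, x l j = 1 ∨ x l j = -1)
    (W : Finset (Fin p)) (hW : (1 - τ) * p ≤ (W.card : ℝ))
    (s : Fin p → ℝ)
    (hs : ∀ j ∈ W, (s j = 1 ∨ s j = -1) ∧ ∀ l, x l j = s j)
    (z : Fin k → EuclideanSpace ℝ (Fin p))
    (hz : ∀ j i, z j i = 1 ∨ z j i = -1)
    (hzorth : ∀ v : EuclideanSpace ℝ (Fin p), ∑ j, ⟪z j, v⟫ • z j = (k : ℝ) • v)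
    (α₁ : ℝ) (hα₁pos : 0 < α₁) (hα₁ : α₁ < Real.sqrt (1 - τ) / (1 + τ))
    (αC : ℝ) (hαC : αC = Real.sqrt p / α₁)
    (gradL : EuclideanSpace ℝ (Fin p) → EuclideanSpace ℝ (Fin p))
    (hgradL : ∀ θ, gradL θ = (n : ℝ)⁻¹ •
      ((∑ l, (⟪x l, θ⟫ - 1) • x l) + ∑ j, ⟪z j, θ⟫ • z j))
    (βL : ℝ)
    (hβL : IsLUB {c : ℝ | ∃ v : EuclideanSpace ℝ (Fin p), ‖v‖ ≤ 1 ∧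
      c = (n : ℝ)⁻¹ * ((∑ l, ⟪x l, v⟫ ^ 2) + ∑ j, ⟪z j, v⟫ ^ 2)} βL)
    (S₁ : ℝ) (hS₁pos : 0 < S₁)
    (hS₁ : S₁ ≤ (Real.sqrt (1 - τ) - (1 + τ) * α₁) / (α₁ * (1 + τ))) :
    -- responses of the dataset are bounded by 1 in absolute value
    (|(1 : ℝ)| ≤ 1 ∧ |(0 : ℝ)| ≤ 1) ∧
    -- covariates are bounded by 1 in the sup-norm
    (∀ l j, |x l j| ≤ 1) ∧ (∀ j i, |z j i| ≤ 1) ∧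
    -- the uniform gradient lower bound over the ball of radius `α₁/√p`
    (∀ θ : EuclideanSpace ℝ (Fin p), ‖θ‖ ≤ α₁ / Real.sqrt p →
      S₁ ≤ αC * ‖gradL θ‖ / βL) :=
  stmt_5_general hp hk τ hτ hkwp n hn x hx W hW s hs z hz hzorth α₁ hα₁pos hα₁ αC hαC gradL hgradL
    βL hβL S₁ hS₁pos hS₁
end

section
/- Let F : ℝ^p → ℝ be convex, differentiable and β_F-smooth over ℝ^p, with a minimizer x_* over ℝ^p. Let (e_t)_{t≥0} be arbitrary vectors in ℝ^p and define iterates x_{t+1} = x_t − (1/β_F)(∇F(x_t) + e_t) starting from an arbitrary x₀ ∈ ℝ^p. For t ≥ 1 let a_t = Σ_{i=1}^t ‖e_{i−1}‖₂/β_F. Then for every t ≥ 1: F(x_t) − F(x_*) ≤ [ (β_F/2)‖x₀ − x_*‖₂² + (2a_t + ‖x₀ − x_*‖₂)·( β_F·a_t + 2·Σ_{i=2}^t (i−1)‖e_{i−1}‖₂ ) ] / t. -/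
/-!
Each inexact step `y = u - β⁻¹ • (∇F u + e)` obeys two estimates. Smoothness alone gives the
descent inequality `F y ≤ F u - ‖∇F u‖² / (2β) + ‖e‖² / (2β)`; adding the convexity inequality
`F u - F x⋆ ≤ ⟪∇F u, u - x⋆⟫` turns it into the three-point bound
`F y - F x⋆ ≤ β/2 (‖u - x⋆‖² - ‖y - x⋆‖²) + ‖e‖ ‖y - x⋆‖`.
The exact gradient step does not increase the distance to `x⋆`, because
`‖∇F u‖² ≤ 2β (F u - F x⋆) ≤ 2β ⟪∇F u, u - x⋆⟫`; hence `‖x_i - x⋆‖ ≤ ‖x₀ - x⋆‖ + a_t`, and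
summing the three-point bound telescopes into a bound on `∑ (F x_{i+1} - F x⋆)`. Finally the
descent inequality lets `F` grow by at most `‖e_i‖² / (2β)` per step, which transfers the bound
on the sum to the last iterate at the price of `∑ i ‖e_i‖² / (2β) ≤ a_t ∑ i ‖e_i‖ / 2`.
-/

open scoped RealInnerProductSpace

theorem natCast_mul_le_sum_add_sum_of_le_add {R : Type*} [Ring R] [PartialOrder R]
    [IsOrderedRing R] {f c : ℕ → R} (h : ∀ n, f (n + 1) ≤ f n + c n) (n : ℕ) :
    n * f n ≤ ∑ i ∈ Finset.range n, f (i + 1) + ∑ i ∈ Finset.range n, i * c i := by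
  induction n with
  | zero => simp
  | succ n ih =>
    calc ((n + 1 : ℕ) : R) * f (n + 1) = n * f (n + 1) + f (n + 1) := by
          rw [Nat.cast_succ, add_one_mul]
      _ ≤ n * (f n + c n) + f (n + 1) := by gcongr; exact h n
      _ = n * f n + n * c n + f (n + 1) := by rw [mul_add]
      _ ≤ (∑ i ∈ Finset.range n, f (i + 1) + ∑ i ∈ Finset.range n, i * c i) + n * c n +
          f (n + 1) := by gcongr
      _ = _ := by rw [Finset.sum_range_succ, Finset.sum_range_succ]; abel

theorem Finset.sum_mul_sq_le_sum_mul_sum {ι R : Type*} [CommSemiring R] [PartialOrder R]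
    [IsOrderedRing R] (s : Finset ι) {a b : ι → R} (ha : ∀ i ∈ s, 0 ≤ a i)
    (hb : ∀ i ∈ s, 0 ≤ b i) :
    ∑ i ∈ s, b i * a i ^ 2 ≤ (∑ i ∈ s, a i) * ∑ i ∈ s, b i * a i := by
  rw [Finset.mul_sum]
  refine Finset.sum_le_sum fun i hi ↦ ?_
  rw [sq, ← mul_assoc, mul_comm]
  exact mul_le_mul_of_nonneg_right (Finset.single_le_sum ha hi) (mul_nonneg (hb i hi) (ha i hi))

variable {E : Type*} [NormedAddCommGroup E] [InnerProductSpace ℝ E] [CompleteSpace E]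

theorem ConvexOn.sub_le_inner_gradient {F : E → ℝ} (hF : ConvexOn ℝ Set.univ F) {u : E}
    (hu : DifferentiableAt ℝ F u) (v : E) : F u - F v ≤ ⟪gradient F u, u - v⟫ := by
  let ℓ := AffineMap.lineMap (k := ℝ) u v
  have hline : HasDerivAt (F ∘ ℓ) ⟪gradient F u, v - u⟫ 0 := by
    have hF' : HasFDerivAt F (InnerProductSpace.toDual ℝ E (gradient F u)) (ℓ 0) := by
      simpa [ℓ] using hu.hasGradientAt.hasFDerivAt
    simpa using hF'.comp_hasDerivAt (0 : ℝ) AffineMap.hasDerivAt_lineMap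
  have hslope := (hF.comp_affineMap ℓ).le_slope_of_hasDerivAt
    (Set.mem_univ 0) (Set.mem_univ 1) one_pos hline
  simp only [slope_def_field, Function.comp_apply, ℓ, AffineMap.lineMap_apply_zero,
    AffineMap.lineMap_apply_one, sub_zero, div_one] at hslope
  rw [← neg_sub v u, inner_neg_right]
  linarith

def QuadraticUpperBound (β : ℝ) (F : E → ℝ) : Prop :=
  ∀ a b, F a - F b - ⟪gradient F b, a - b⟫ ≤ β / 2 * ‖a - b‖ ^ 2

namespace QuadraticUpperBound

variable {β : ℝ} {F : E → ℝ} {xstar : E}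

theorem le_sub_add_of_inexact_step (hF : QuadraticUpperBound β F) (hβ : 0 < β) (u e : E) :
    F (u - β⁻¹ • (gradient F u + e)) ≤
      F u - ‖gradient F u‖ ^ 2 / (2 * β) + ‖e‖ ^ 2 / (2 * β) := by
  have h := hF (u - β⁻¹ • (gradient F u + e)) u
  set g := gradient F u
  rw [sub_sub_cancel_left, inner_neg_right, norm_neg, real_inner_smul_right, norm_smul,
    Real.norm_of_nonneg (inv_nonneg.2 hβ.le), inner_add_right, real_inner_self_eq_norm_sq,
    mul_pow, norm_add_sq_real] at h
  have hβ0 : β ≠ 0 := hβ.ne'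
  have hexpand : β / 2 * (β⁻¹ ^ 2 * (‖g‖ ^ 2 + 2 * ⟪g, e⟫ + ‖e‖ ^ 2)) -
      β⁻¹ * (‖g‖ ^ 2 + ⟪g, e⟫) = ‖e‖ ^ 2 / (2 * β) - ‖g‖ ^ 2 / (2 * β) := by
    field_simp
    ring
  linarith

theorem norm_gradient_sq_le (hF : QuadraticUpperBound β F) (hβ : 0 < β)
    (hmin : ∀ y, F xstar ≤ F y) (u : E) :
    ‖gradient F u‖ ^ 2 ≤ 2 * β * (F u - F xstar) := by
  have h := hF.le_sub_add_of_inexact_step hβ u 0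
  rw [add_zero, norm_zero, zero_pow two_ne_zero, zero_div, add_zero] at h
  have : ‖gradient F u‖ ^ 2 / (2 * β) ≤ F u - F xstar := by
    linarith [hmin (u - β⁻¹ • gradient F u)]
  rwa [div_le_iff₀ (by positivity), mul_comm] at this

theorem sub_le_of_inexact_step (hF : QuadraticUpperBound β F) (hβ : 0 < β)
    (hconv : ConvexOn ℝ Set.univ F) {u : E} (hu : DifferentiableAt ℝ F u) (e : E) :
    F (u - β⁻¹ • (gradient F u + e)) - F xstar ≤
      β / 2 * (‖u - xstar‖ ^ 2 - ‖u - β⁻¹ • (gradient F u + e) - xstar‖ ^ 2) +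
        ‖e‖ * ‖u - β⁻¹ • (gradient F u + e) - xstar‖ := by
  have hdescent := hF.le_sub_add_of_inexact_step hβ u e
  have hgap := hconv.sub_le_inner_gradient hu xstar
  set g := gradient F u
  set y := u - β⁻¹ • (g + e)
  have hcs : -(‖e‖ * ‖y - xstar‖) ≤ ⟪e, y - xstar⟫ :=
    neg_le_of_abs_le (abs_real_inner_le_norm _ _)
  have hy : y - xstar = (u - xstar) - β⁻¹ • (g + e) := sub_right_comm _ _ _
  have hβ0 : β ≠ 0 := hβ.ne'
  have hexpand : β / 2 * (‖u - xstar‖ ^ 2 - ‖y - xstar‖ ^ 2) - ⟪e, y - xstar⟫ =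
      ⟪g, u - xstar⟫ - ‖g‖ ^ 2 / (2 * β) + ‖e‖ ^ 2 / (2 * β) := by
    rw [hy, norm_sub_sq_real (u - xstar), inner_sub_right, real_inner_smul_right,
      real_inner_smul_right, norm_smul, Real.norm_of_nonneg (inv_nonneg.2 hβ.le), mul_pow,
      norm_add_sq_real, inner_add_right, inner_add_right, real_inner_self_eq_norm_sq,
      real_inner_comm e g, real_inner_comm (u - xstar) g, real_inner_comm (u - xstar) e]
    field_simp
    ring
  linarith

theorem norm_gradient_step_sub_le (hF : QuadraticUpperBound β F) (hβ : 0 < β)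
    (hconv : ConvexOn ℝ Set.univ F) (hmin : ∀ y, F xstar ≤ F y) {u : E}
    (hu : DifferentiableAt ℝ F u) :
    ‖u - β⁻¹ • gradient F u - xstar‖ ≤ ‖u - xstar‖ := by
  have hgrad := hF.norm_gradient_sq_le hβ hmin u
  have hgap := hconv.sub_le_inner_gradient hu xstar
  set g := gradient F u
  have hsq : ‖u - xstar - β⁻¹ • g‖ ^ 2 =
      ‖u - xstar‖ ^ 2 - β⁻¹ * (2 * ⟪g, u - xstar⟫ - β⁻¹ * ‖g‖ ^ 2) := by
    rw [norm_sub_sq_real, real_inner_smul_right, norm_smul,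
      Real.norm_of_nonneg (inv_nonneg.2 hβ.le), real_inner_comm]
    ring
  have hcocoercive : β⁻¹ * ‖g‖ ^ 2 ≤ 2 * ⟪g, u - xstar⟫ := by
    rw [inv_mul_le_iff₀ hβ]
    linarith [mul_le_mul_of_nonneg_left hgap (by positivity : (0 : ℝ) ≤ 2 * β)]
  have hdecrease : 0 ≤ β⁻¹ * (2 * ⟪g, u - xstar⟫ - β⁻¹ * ‖g‖ ^ 2) :=
    mul_nonneg (inv_nonneg.2 hβ.le) (sub_nonneg.2 hcocoercive)
  rw [sub_right_comm, ← sq_le_sq₀ (norm_nonneg _) (norm_nonneg _), hsq]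
  linarith

theorem norm_inexact_step_sub_le (hF : QuadraticUpperBound β F) (hβ : 0 < β)
    (hconv : ConvexOn ℝ Set.univ F) (hmin : ∀ y, F xstar ≤ F y) {u : E}
    (hu : DifferentiableAt ℝ F u) (e : E) :
    ‖u - β⁻¹ • (gradient F u + e) - xstar‖ ≤ ‖u - xstar‖ + β⁻¹ * ‖e‖ := by
  have hsplit : u - β⁻¹ • (gradient F u + e) - xstar =
      (u - β⁻¹ • gradient F u - xstar) - β⁻¹ • e := by
    rw [smul_add]
    abel
  rw [hsplit]
  calc _ ≤ ‖u - β⁻¹ • gradient F u - xstar‖ + ‖β⁻¹ • e‖ := norm_sub_le _ _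
    _ ≤ ‖u - xstar‖ + β⁻¹ * ‖e‖ := by
      rw [norm_smul, Real.norm_of_nonneg (inv_nonneg.2 hβ.le)]
      gcongr
      exact hF.norm_gradient_step_sub_le hβ hconv hmin hu

section Iterates

variable {x e : ℕ → E}

theorem norm_iterate_sub_le (hF : QuadraticUpperBound β F) (hβ : 0 < β)
    (hconv : ConvexOn ℝ Set.univ F) (hdiff : Differentiable ℝ F) (hmin : ∀ y, F xstar ≤ F y)
    (hstep : ∀ t, x (t + 1) = x t - β⁻¹ • (gradient F (x t) + e t)) (n : ℕ) :
    ‖x n - xstar‖ ≤ ‖x 0 - xstar‖ + β⁻¹ * ∑ k ∈ Finset.range n, ‖e k‖ := by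
  induction n with
  | zero => simp
  | succ n ih =>
    rw [hstep, Finset.sum_range_succ, mul_add]
    linarith [hF.norm_inexact_step_sub_le hβ hconv hmin (hdiff (x n)) (e n)]

theorem sum_iterate_sub_le (hF : QuadraticUpperBound β F) (hβ : 0 < β)
    (hconv : ConvexOn ℝ Set.univ F) (hdiff : Differentiable ℝ F) (hmin : ∀ y, F xstar ≤ F y)
    (hstep : ∀ t, x (t + 1) = x t - β⁻¹ • (gradient F (x t) + e t)) (t : ℕ) :
    ∑ i ∈ Finset.range t, (F (x (i + 1)) - F xstar) ≤
      β / 2 * ‖x 0 - xstar‖ ^ 2 + (∑ i ∈ Finset.range t, ‖e i‖) *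
        (‖x 0 - xstar‖ + β⁻¹ * ∑ i ∈ Finset.range t, ‖e i‖) := by
  set R := ‖x 0 - xstar‖ + β⁻¹ * ∑ i ∈ Finset.range t, ‖e i‖
  have hdist : ∀ i ∈ Finset.range t, ‖x (i + 1) - xstar‖ ≤ R := by
    intro i hi
    refine (hF.norm_iterate_sub_le hβ hconv hdiff hmin hstep (i + 1)).trans ?_
    refine add_le_add_right (mul_le_mul_of_nonneg_left ?_ (inv_nonneg.2 hβ.le)) _
    exact Finset.sum_le_sum_of_subset_of_nonneg
      (Finset.range_subset_range.2 (Finset.mem_range.1 hi)) fun _ _ _ ↦ norm_nonneg _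
  have hstepwise : ∀ i ∈ Finset.range t, F (x (i + 1)) - F xstar ≤
      β / 2 * (‖x i - xstar‖ ^ 2 - ‖x (i + 1) - xstar‖ ^ 2) + ‖e i‖ * R := by
    intro i hi
    have := hF.sub_le_of_inexact_step (xstar := xstar) hβ hconv (hdiff (x i)) (e i)
    rw [← hstep] at this
    linarith [mul_le_mul_of_nonneg_left (hdist i hi) (norm_nonneg (e i))]
  calc _ ≤ ∑ i ∈ Finset.range t,
        (β / 2 * (‖x i - xstar‖ ^ 2 - ‖x (i + 1) - xstar‖ ^ 2) + ‖e i‖ * R) :=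
        Finset.sum_le_sum hstepwise
    _ = β / 2 * (‖x 0 - xstar‖ ^ 2 - ‖x t - xstar‖ ^ 2) +
        (∑ i ∈ Finset.range t, ‖e i‖) * R := by
        rw [Finset.sum_add_distrib, ← Finset.mul_sum, ← Finset.sum_mul,
          Finset.sum_range_sub' (fun i ↦ ‖x i - xstar‖ ^ 2)]
    _ ≤ _ := by
        gcongr ?_ + _
        exact mul_le_mul_of_nonneg_left (sub_le_self _ (sq_nonneg _)) (by positivity)

theorem natCast_mul_iterate_sub_le (hF : QuadraticUpperBound β F) (hβ : 0 < β)
    (hstep : ∀ t, x (t + 1) = x t - β⁻¹ • (gradient F (x t) + e t)) (t : ℕ) :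
    t * (F (x t) - F xstar) ≤ ∑ i ∈ Finset.range t, (F (x (i + 1)) - F xstar) +
      (∑ i ∈ Finset.range t, (i : ℝ) * ‖e i‖ ^ 2) / (2 * β) := by
  have hgrowth : ∀ n, F (x (n + 1)) - F xstar ≤ F (x n) - F xstar + ‖e n‖ ^ 2 / (2 * β) := by
    intro n
    have := hF.le_sub_add_of_inexact_step hβ (x n) (e n)
    rw [← hstep] at this
    have : 0 ≤ ‖gradient F (x n)‖ ^ 2 / (2 * β) := by positivity
    linarith
  simpa only [mul_div_assoc', ← Finset.sum_div] using
    natCast_mul_le_sum_add_sum_of_le_add (f := fun n ↦ F (x n) - F xstar)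
      (c := fun n ↦ ‖e n‖ ^ 2 / (2 * β)) hgrowth t

end Iterates

end QuadraticUpperBound

/-- Convergence of inexact gradient descent with arbitrary additive gradient errors for
a convex, `β_F`-smooth function (Lemma `Inexact_GD_lemma` in the paper, adapted from
Schmidt et al. 2011):
`F(x_t) − F(x_*) ≤ [(β_F/2)‖x₀ − x_*‖² + (2a_t + ‖x₀ − x_*‖)(β_F·a_t +
2·Σ_{i=2}^t (i−1)‖e_{i−1}‖)] / t`, where `a_t = Σ_{i=1}^t ‖e_{i−1}‖/β_F`. -/
theorem stmt_12 {p : ℕ} (βF : ℝ) (hβF : 0 < βF)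
    (F : EuclideanSpace ℝ (Fin p) → ℝ)
    (hFconv : ConvexOn ℝ Set.univ F) (hFdiff : Differentiable ℝ F)
    (hsm : ∀ a b : EuclideanSpace ℝ (Fin p),
      F a - F b - ⟪gradient F b, a - b⟫ ≤ βF / 2 * ‖a - b‖ ^ 2)
    (xstar : EuclideanSpace ℝ (Fin p)) (hmin : ∀ y, F xstar ≤ F y)
    (e x : ℕ → EuclideanSpace ℝ (Fin p))
    (hstep : ∀ t : ℕ, x (t + 1) = x t - (1 / βF) • (gradient F (x t) + e t)) :
    ∀ t : ℕ, 1 ≤ t →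
      F (x t) - F xstar ≤
        (βF / 2 * ‖x 0 - xstar‖ ^ 2 +
          (2 * ((∑ i ∈ Finset.range t, ‖e i‖) / βF) + ‖x 0 - xstar‖) *
            (βF * ((∑ i ∈ Finset.range t, ‖e i‖) / βF) +
              2 * ∑ i ∈ Finset.range t, (i : ℝ) * ‖e i‖)) / t := by
  intro t ht
  have hF : QuadraticUpperBound βF F := hsm
  simp only [one_div] at hstep
  have hsum := hF.sum_iterate_sub_le hβF hFconv hFdiff hmin hstep t
  have hlast := hF.natCast_mul_iterate_sub_le (xstar := xstar) hβF hstep t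
  have hweights := (Finset.range t).sum_mul_sq_le_sum_mul_sum (a := fun i ↦ ‖e i‖)
    (b := fun i ↦ (i : ℝ)) (fun _ _ ↦ norm_nonneg _) (fun _ _ ↦ Nat.cast_nonneg _)
  rw [le_div_iff₀ (by exact_mod_cast ht), mul_div_cancel₀ _ hβF.ne', mul_comm]
  have hD := norm_nonneg (x 0 - xstar)
  have hA : 0 ≤ ∑ i ∈ Finset.range t, ‖e i‖ := Finset.sum_nonneg fun _ _ ↦ norm_nonneg _
  have hS : 0 ≤ ∑ i ∈ Finset.range t, (i : ℝ) * ‖e i‖ :=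
    Finset.sum_nonneg fun _ _ ↦ by positivity
  generalize ‖x 0 - xstar‖ = D at *
  generalize ∑ i ∈ Finset.range t, ‖e i‖ = A at *
  generalize ∑ i ∈ Finset.range t, (i : ℝ) * ‖e i‖ = S at *
  have hslack : βF / 2 * D ^ 2 + (2 * (A / βF) + D) * (A + 2 * S) -
      (βF / 2 * D ^ 2 + A * (D + βF⁻¹ * A) + A * S / (2 * βF)) =
      βF⁻¹ * (A ^ 2 + 7 / 2 * (A * S)) + 2 * (D * S) := by
    field_simp
    ring
  have : 0 ≤ βF⁻¹ * (A ^ 2 + 7 / 2 * (A * S)) + 2 * (D * S) := by positivity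
  linarith [div_le_div_of_nonneg_right hweights (by positivity : (0 : ℝ) ≤ 2 * βF)]
end
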